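/- Suppose p is a probability distribution on 2^[m] whose support is a natural distributive lattice L = J(P). If p satisfies all the pairwise Markov statements of a graph G = ([m], E), then the minimal graph of L is a subgraph of G. -/

import Mathlib

open scoped BigOperators
attribute [local instance] Classical.propDecidable

noncomputable section

/-- The order ideals of a partial order `P` on `Fin m`. -/
def orderIdeals {m : ℕ} (P : PartialOrder (Fin m)) : Set (Finset (Fin m)) :=
  {S | ∀ t ∈ S, ∀ s, P.le s t → s ∈ S}

/-- `i` covers `j` in the partial order `P`. -/
def Covers {m : ℕ} (P : PartialOrder (Fin m)) (i j : Fin m) : Prop :=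
  P.lt j i ∧ ∀ r, ¬ (P.lt j r ∧ P.lt r i)

/-- The minimal graph of a natural lattice `L = J(P)`: edges are the cover relations of `P`. -/
def minimalGraph {m : ℕ} (P : PartialOrder (Fin m)) : SimpleGraph (Fin m) where
  Adj i j := Covers P i j ∨ Covers P j i
  symm := ⟨by intro i j h; tauto⟩
  loopless := ⟨by
    intro i h
    rcases h with h | h <;>
      exact @lt_irrefl (Fin m) P.toPreorder i h.1⟩

/-- `p` satisfies the pairwise Markov statements of `G`. -/
def PairwiseMarkov {m : ℕ} (G : SimpleGraph (Fin m)) (p : Finset (Fin m) → ℝ) : Prop :=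
  ∀ i j : Fin m, i ≠ j → ¬ G.Adj i j →
    ∀ C : Finset (Fin m), i ∉ C → j ∉ C →
      p C * p (C ∪ {i, j}) = p (C ∪ {i}) * p (C ∪ {j})

/-- `S` is a maximal clique of `G`. -/
def IsMaxClique {m : ℕ} (G : SimpleGraph (Fin m)) (S : Finset (Fin m)) : Prop :=
  G.IsClique (S : Set (Fin m)) ∧
    ∀ T : Finset (Fin m), G.IsClique (T : Set (Fin m)) → S ⊆ T → T = S

/-- `p` factors according to the graph `G`: there are nonnegative parameters `a S T`,
one for each maximal clique `S` of `G` and each `T ⊆ S`, and `Z > 0`, such that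
`p T = (1/Z) * ∏_{S maximal clique} a S (S ∩ T)`. -/
def FactorsAccording {m : ℕ} (G : SimpleGraph (Fin m)) (p : Finset (Fin m) → ℝ) : Prop :=
  ∃ (a : Finset (Fin m) → Finset (Fin m) → ℝ) (Z : ℝ),
    0 < Z ∧ (∀ S T, 0 ≤ a S T) ∧
    ∀ T : Finset (Fin m),
      p T = (1 / Z) * ∏ S ∈ Finset.univ.filter (fun S => IsMaxClique G S), a S (S ∩ T)

/-- If `p` has natural lattice support `L = J(P)` and satisfies the pairwise Markov
statements of `G`, then the minimal graph of `L` is a subgraph of `G`. -/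
theorem minimalGraph_subgraph_of_pairwiseMarkov
    (m : ℕ) (P : PartialOrder (Fin m)) (G : SimpleGraph (Fin m))
    (p : Finset (Fin m) → ℝ)
    (hnonneg : ∀ S, 0 ≤ p S)
    (hsum : ∑ S : Finset (Fin m), p S = 1)
    (hsupp : {S : Finset (Fin m) | 0 < p S} = orderIdeals P)
    (hpw : PairwiseMarkov G p) :
    minimalGraph P ≤ G := by
  -- membership in the support
  have hmem : ∀ S : Finset (Fin m), S ∈ orderIdeals P ↔ 0 < p S := by
    intro S
    constructor
    · intro h
      have : S ∈ {S : Finset (Fin m) | 0 < p S} := hsupp ▸ h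
      exact this
    · intro h
      have : S ∈ {S : Finset (Fin m) | 0 < p S} := h
      rw [hsupp] at this
      exact this
  have key : ∀ i j : Fin m, Covers P i j → G.Adj i j := by
    intro i j hc
    by_contra hG
    obtain ⟨hji, hnocov⟩ := hc
    have hij : i ≠ j := by
      intro h
      rw [h] at hji
      exact ((P.lt_iff_le_not_ge j j).mp hji).2 ((P.lt_iff_le_not_ge j j).mp hji).1
    -- helper order facts
    have lelt : ∀ {a b c : Fin m}, P.le a b → P.lt b c → P.lt a c := by
      intro a b c hab hbc
      rw [P.lt_iff_le_not_ge] at hbc ⊢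
      exact ⟨P.le_trans _ _ _ hab hbc.1, fun h => hbc.2 (P.le_trans _ _ _ h hab)⟩
    have ltne : ∀ {a b : Fin m}, P.le a b → a ≠ b → P.lt a b := by
      intro a b hab hne
      rw [P.lt_iff_le_not_ge]
      exact ⟨hab, fun h => hne (P.le_antisymm _ _ hab h)⟩
    set C : Finset (Fin m) := Finset.univ.filter (fun s => P.lt s i ∧ s ≠ j) with hC
    have hCmem : ∀ s, s ∈ C ↔ P.lt s i ∧ s ≠ j := by
      intro s; simp [hC]
    have hiC : i ∉ C := by
      rw [hCmem]
      rintro ⟨h, -⟩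
      exact ((P.lt_iff_le_not_ge i i).mp h).2 ((P.lt_iff_le_not_ge i i).mp h).1
    have hjC : j ∉ C := by
      rw [hCmem]; rintro ⟨-, h⟩; exact h rfl
    -- C is an order ideal
    have hCid : C ∈ orderIdeals P := by
      intro t ht s hs
      rw [hCmem] at ht ⊢
      refine ⟨lelt hs ht.1, ?_⟩
      rintro rfl
      exact hnocov t ⟨ltne hs (Ne.symm ht.2), ht.1⟩
    -- C ∪ {i, j} is an order ideal
    have hCijmem : ∀ s, s ∈ C ∪ {i, j} ↔ s ∈ C ∨ s = i ∨ s = j := by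
      intro s; simp [Finset.mem_union, Finset.mem_insert]; tauto
    have hCijid : (C ∪ {i, j}) ∈ orderIdeals P := by
      intro t ht s hs
      rw [hCijmem] at ht ⊢
      by_cases hsj : s = j
      · exact Or.inr (Or.inr hsj)
      by_cases hsi : s = i
      · exact Or.inr (Or.inl hsi)
      left
      rw [hCmem]
      refine ⟨?_, hsj⟩
      rcases ht with ht | rfl | rfl
      · rw [hCmem] at ht
        exact lelt hs ht.1
      · exact ltne hs hsi
      · exact lelt hs hji
    -- C ∪ {i} is not an order ideal
    have hCi : (C ∪ {i}) ∉ orderIdeals P := by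
      intro h
      have hiIn : i ∈ C ∪ {i} := by simp
      have hjIn : j ∈ C ∪ {i} := h i hiIn j ((P.lt_iff_le_not_ge j i).mp hji).1
      rcases Finset.mem_union.mp hjIn with h' | h'
      · exact hjC h'
      · have hji' : j = i := by simpa using h'
        exact hij hji'.symm
    have h0 : p (C ∪ {i}) = 0 := by
      rcases lt_or_eq_of_le (hnonneg (C ∪ {i})) with h | h
      · exact absurd ((hmem _).mpr h) hCi
      · exact h.symm
    have hpos1 : 0 < p C := (hmem _).mp hCid
    have hpos2 : 0 < p (C ∪ {i, j}) := (hmem _).mp hCijid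
    have := hpw i j hij hG C hiC hjC
    rw [h0, zero_mul] at this
    nlinarith
  intro i j hadj
  rcases hadj with h | h
  · exact key i j h
  · exact (key j i h).symm


end
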